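/- Let d ≥ 2. Then: (1) for every z ∈ ℂ with |z| = 1 the set 𝓑_z is closed in ℂ^{D_d}; (2) the union B := ⋃_{|z|=1} 𝓑_z is closed in ℂ^{D_d}; (3) Acc^∞(B) ⊆ E, i.e. for every μ with ‖μ‖ = 1 which is the limit of λ_n/‖λ_n‖ for some sequence (λ_n) in B with ‖λ_n‖ → ∞, there exists z with |z| = 1 such that q_{μ,z} and q'_{μ,z} have a common root. -/

import Mathlib

set_option maxHeartbeats 1000000
noncomputable section

/-- The parameter space `ℂ^{D_d}` with the Euclidean norm, indexed by the pairs
`(j,k)` with `0 ≤ j ≤ d-2` and `0 ≤ k ≤ d-j` (so of dimension `D_d = (d-1)(d+4)/2`). -/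
abbrev Param (d : ℕ) := EuclideanSpace ℂ (Σ j : Fin (d - 1), Fin (d - (j : ℕ) + 1))

/-- The fiber polynomial `q_{λ,z}(w) = w^d + Σ_{j=0}^{d-2} (Σ_{k=0}^{d-j} a_{j,k}^{d-j} z^k) w^j`. -/
def qpoly (d : ℕ) (lam : Param d) (z w : ℂ) : ℂ :=
  w ^ d + ∑ j : Fin (d - 1),
    (∑ k : Fin (d - (j : ℕ) + 1), lam ⟨j, k⟩ ^ (d - (j : ℕ)) * z ^ (k : ℕ)) * w ^ (j : ℕ)

/-- Non-autonomous fiberwise iterates along the base `p(z) = z^d`: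
`Q⁰ = id`, `Q^{n+1}_{λ,z} = q_{λ, z^{d^n}} ∘ Q^n_{λ,z}`. -/
def Qit (d : ℕ) (lam : Param d) (z : ℂ) : ℕ → ℂ → ℂ
  | 0, w => w
  | n + 1, w => qpoly d lam (z ^ d ^ n) (Qit d lam z n w)

/-- `R_λ = Σ_{j=0}^{d-2} (Σ_{k=0}^{d-j} |a_{j,k}|^{d-j})^{1/(d-j)}` (real powers). -/
def Rlam (d : ℕ) (lam : Param d) : ℝ :=
  ∑ j : Fin (d - 1),
    (∑ k : Fin (d - (j : ℕ) + 1), ‖lam ⟨j, k⟩‖ ^ (d - (j : ℕ))) ^ (((d - (j : ℕ) : ℕ) : ℝ))⁻¹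

/-- `𝓑_z`: parameters having a critical point with bounded fiberwise orbit over `z`. -/
def Bz (d : ℕ) (z : ℂ) : Set (Param d) :=
  {lam | ∃ c : ℂ, deriv (qpoly d lam z) c = 0 ∧
    Bornology.IsBounded (Set.range fun n => Qit d lam z n c)}

/-- Unit-sphere model of the cluster set at infinity of a set of parameters. -/
def AccInf (d : ℕ) (A : Set (Param d)) : Set (Param d) :=
  {μ | ‖μ‖ = 1 ∧ ∃ lamSeq : ℕ → Param d, (∀ n, lamSeq n ∈ A) ∧
    Filter.Tendsto (fun n => ‖lamSeq n‖) Filter.atTop Filter.atTop ∧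
    Filter.Tendsto (fun n => (‖lamSeq n‖)⁻¹ • lamSeq n) Filter.atTop (nhds μ)}

/-- `E_z`: unit-norm parameters `μ` such that `q_{μ,z}` and `q'_{μ,z}` have a common root. -/
def Ez (d : ℕ) (z : ℂ) : Set (Param d) :=
  {μ | ‖μ‖ = 1 ∧ ∃ c : ℂ, qpoly d μ z c = 0 ∧ deriv (qpoly d μ z) c = 0}

-- coefficients
def coefB (d : ℕ) (lam : Param d) (z : ℂ) (j : Fin (d - 1)) : ℂ :=
  ∑ k : Fin (d - (j : ℕ) + 1), lam ⟨j, k⟩ ^ (d - (j : ℕ)) * z ^ (k : ℕ)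
def Xj (d : ℕ) (lam : Param d) (j : Fin (d - 1)) : ℝ :=
  ∑ k : Fin (d - (j : ℕ) + 1), ‖lam ⟨j, k⟩‖ ^ (d - (j : ℕ))
def Sj (d : ℕ) (lam : Param d) (j : Fin (d - 1)) : ℝ :=
  (Xj d lam j) ^ (((d - (j : ℕ) : ℕ) : ℝ))⁻¹

lemma qpoly_eq (d : ℕ) (lam : Param d) (z w : ℂ) :
    qpoly d lam z w = w ^ d + ∑ j : Fin (d - 1), coefB d lam z j * w ^ (j : ℕ) := rfl
lemma Rlam_eq (d : ℕ) (lam : Param d) : Rlam d lam = ∑ j : Fin (d - 1), Sj d lam j := rfl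

lemma Xj_nonneg (d : ℕ) (lam : Param d) (j : Fin (d - 1)) : 0 ≤ Xj d lam j :=
  Finset.sum_nonneg fun k _ => pow_nonneg (norm_nonneg _) _
lemma Sj_nonneg (d : ℕ) (lam : Param d) (j : Fin (d - 1)) : 0 ≤ Sj d lam j :=
  Real.rpow_nonneg (Xj_nonneg d lam j) _
lemma Rlam_nonneg (d : ℕ) (lam : Param d) : 0 ≤ Rlam d lam :=
  Finset.sum_nonneg fun j _ => Sj_nonneg d lam j

lemma jlt (d : ℕ) (hd : 2 ≤ d) (j : Fin (d - 1)) : (j : ℕ) + 2 ≤ d := by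
  have := j.2; omega

lemma Sj_pow (d : ℕ) (hd : 2 ≤ d) (lam : Param d) (j : Fin (d - 1)) :
    Sj d lam j ^ (d - (j : ℕ)) = Xj d lam j := by
  have h : d - (j : ℕ) ≠ 0 := by have := jlt d hd j; omega
  exact_mod_cast Real.rpow_inv_natCast_pow (Xj_nonneg d lam j) h

lemma coefB_le (d : ℕ) (lam : Param d) (z : ℂ) (hz : ‖z‖ ≤ 1) (j : Fin (d - 1)) :
    ‖coefB d lam z j‖ ≤ Xj d lam j := by
  refine (norm_sum_le _ _).trans (Finset.sum_le_sum fun k _ => ?_)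
  rw [norm_mul, norm_pow, norm_pow]
  calc ‖lam ⟨j, k⟩‖ ^ (d - (j:ℕ)) * ‖z‖ ^ (k:ℕ)
      ≤ ‖lam ⟨j, k⟩‖ ^ (d - (j:ℕ)) * 1 := by
        refine mul_le_mul_of_nonneg_left ?_ (by positivity)
        exact pow_le_one₀ (norm_nonneg _) hz
    _ = ‖lam ⟨j, k⟩‖ ^ (d - (j:ℕ)) := mul_one _

lemma Sj_le_Rlam (d : ℕ) (lam : Param d) (j : Fin (d - 1)) : Sj d lam j ≤ Rlam d lam := by
  rw [Rlam_eq]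
  exact Finset.single_le_sum (fun i _ => Sj_nonneg d lam i) (Finset.mem_univ j)

-- the escape step
lemma escape_step (d : ℕ) (hd : 2 ≤ d) (lam : Param d) (z w : ℂ)
    (hz : ‖z‖ ≤ 1) (hw : Rlam d lam + 2 ≤ ‖w‖) :
    ‖w‖ + 2 ≤ ‖qpoly d lam z w‖ := by
  have hR := Rlam_nonneg d lam
  have hw2 : (2:ℝ) ≤ ‖w‖ := by linarith
  have hw1 : (1:ℝ) ≤ ‖w‖ := by linarith
  have key : ∀ j : Fin (d - 1), ‖coefB d lam z j * w ^ (j:ℕ)‖ ≤ Sj d lam j * ‖w‖ ^ (d - 1) := by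
    intro j
    have hj2 := jlt d hd j
    have hSw : Sj d lam j ≤ ‖w‖ := le_trans (by linarith [Sj_le_Rlam d lam j]) le_rfl
    have h1 : ‖coefB d lam z j‖ ≤ Sj d lam j * ‖w‖ ^ (d - (j:ℕ) - 1) := by
      have := coefB_le d lam z hz j
      have h2 : Xj d lam j = Sj d lam j * Sj d lam j ^ (d - (j:ℕ) - 1) := by
        rw [← Sj_pow d hd lam j]
        rw [← pow_succ']
        congr 1; omega
      have h3 : Sj d lam j ^ (d - (j:ℕ) - 1) ≤ ‖w‖ ^ (d - (j:ℕ) - 1) :=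
        pow_le_pow_left₀ (Sj_nonneg d lam j) hSw _
      calc ‖coefB d lam z j‖ ≤ Xj d lam j := this
        _ = Sj d lam j * Sj d lam j ^ (d - (j:ℕ) - 1) := h2
        _ ≤ Sj d lam j * ‖w‖ ^ (d - (j:ℕ) - 1) :=
            mul_le_mul_of_nonneg_left h3 (Sj_nonneg d lam j)
    rw [norm_mul, norm_pow]
    calc ‖coefB d lam z j‖ * ‖w‖ ^ (j:ℕ)
        ≤ (Sj d lam j * ‖w‖ ^ (d - (j:ℕ) - 1)) * ‖w‖ ^ (j:ℕ) :=
          mul_le_mul_of_nonneg_right h1 (by positivity)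
      _ = Sj d lam j * ‖w‖ ^ (d - 1) := by
          rw [mul_assoc, ← pow_add]; congr 2; omega
  have hsum : ‖∑ j : Fin (d-1), coefB d lam z j * w ^ (j:ℕ)‖ ≤ Rlam d lam * ‖w‖ ^ (d - 1) := by
    calc ‖∑ j : Fin (d-1), coefB d lam z j * w ^ (j:ℕ)‖
        ≤ ∑ j : Fin (d-1), ‖coefB d lam z j * w ^ (j:ℕ)‖ := norm_sum_le _ _
      _ ≤ ∑ j : Fin (d-1), Sj d lam j * ‖w‖ ^ (d - 1) := Finset.sum_le_sum fun j _ => key j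
      _ = Rlam d lam * ‖w‖ ^ (d - 1) := by rw [Rlam_eq, Finset.sum_mul]
  have hlow : ‖w‖ ^ d - Rlam d lam * ‖w‖ ^ (d - 1) ≤ ‖qpoly d lam z w‖ := by
    rw [qpoly_eq]
    have := norm_sub_norm_le (w ^ d) (-(∑ j : Fin (d-1), coefB d lam z j * w ^ (j:ℕ)))
    simp only [sub_neg_eq_add, norm_neg] at this
    have h4 : ‖w ^ d‖ = ‖w‖ ^ d := norm_pow _ _
    linarith [hsum, this]
  have hwd : ‖w‖ ^ d = ‖w‖ * ‖w‖ ^ (d - 1) := by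
    rw [← pow_succ']; congr 1; omega
  have hmono : ‖w‖ ≤ ‖w‖ ^ (d - 1) := by
    calc ‖w‖ = ‖w‖ ^ 1 := (pow_one _).symm
      _ ≤ ‖w‖ ^ (d - 1) := pow_le_pow_right₀ hw1 (by omega)
  nlinarith [hlow, hwd, hmono, pow_nonneg (norm_nonneg w) (d-1)]

lemma escape_iter (d : ℕ) (hd : 2 ≤ d) (lam : Param d) (z : ℂ) (hz : ‖z‖ = 1)
    (c : ℂ) (n : ℕ) (hn : Rlam d lam + 2 ≤ ‖Qit d lam z n c‖) :
    ∀ m : ℕ, ‖Qit d lam z n c‖ + 2 * m ≤ ‖Qit d lam z (n + m) c‖ := by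
  intro m
  induction m with
  | zero => simp
  | succ m ih =>
    have habs : ‖z ^ d ^ (n + m)‖ ≤ 1 := by
      rw [norm_pow, hz, one_pow]
    have hbig : Rlam d lam + 2 ≤ ‖Qit d lam z (n + m) c‖ := by
      have : (0:ℝ) ≤ 2 * m := by positivity
      linarith
    have := escape_step d hd lam (z ^ d ^ (n + m)) (Qit d lam z (n + m) c) habs hbig
    have hQ : Qit d lam z (n + (m+1)) c = qpoly d lam (z ^ d ^ (n + m)) (Qit d lam z (n + m) c) := rfl
    rw [hQ]
    push_cast
    linarith

lemma memBz_iff (d : ℕ) (hd : 2 ≤ d) (lam : Param d) (z : ℂ) (hz : ‖z‖ = 1) :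
    lam ∈ Bz d z ↔
    ∃ c : ℂ, deriv (qpoly d lam z) c = 0 ∧ ∀ n, ‖Qit d lam z n c‖ ≤ Rlam d lam + 2 := by
  constructor
  · rintro ⟨c, hc, hb⟩
    refine ⟨c, hc, fun n => ?_⟩
    by_contra hlt
    push_neg at hlt
    obtain ⟨C, hC⟩ := (isBounded_iff_forall_norm_le).mp hb
    obtain ⟨m, hm⟩ := exists_nat_gt C
    have h1 := escape_iter d hd lam z hz c n hlt.le m
    have h2 := hC _ ⟨n + m, rfl⟩
    have h3 : (0:ℝ) ≤ ‖Qit d lam z n c‖ := norm_nonneg _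
    have : (m:ℝ) ≤ 2 * m := by nlinarith [Nat.cast_nonneg (α := ℝ) m]
    linarith
  · rintro ⟨c, hc, hb⟩
    refine ⟨c, hc, (isBounded_iff_forall_norm_le).mpr ⟨Rlam d lam + 2, ?_⟩⟩
    rintro x ⟨n, rfl⟩
    exact hb n

def dq (d : ℕ) (lam : Param d) (z w : ℂ) : ℂ :=
  d * w ^ (d - 1) + ∑ j : Fin (d - 1), coefB d lam z j * (((j:ℕ) : ℂ) * w ^ ((j:ℕ) - 1))

lemma hasDerivAt_qpoly (d : ℕ) (lam : Param d) (z w : ℂ) :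
    HasDerivAt (fun w => qpoly d lam z w) (dq d lam z w) w := by
  have h1 : HasDerivAt (fun w : ℂ => w ^ d) ((d:ℂ) * w ^ (d - 1)) w := hasDerivAt_pow d w
  have h2 : HasDerivAt (fun w : ℂ => ∑ j : Fin (d-1), coefB d lam z j * w ^ (j:ℕ))
      (∑ j : Fin (d-1), coefB d lam z j * (((j:ℕ):ℂ) * w ^ ((j:ℕ) - 1))) w := by
    apply HasDerivAt.fun_sum
    intro j _
    exact (hasDerivAt_pow (j:ℕ) w).const_mul (coefB d lam z j)
  exact h1.add h2

lemma deriv_qpoly (d : ℕ) (lam : Param d) (z w : ℂ) :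
    deriv (qpoly d lam z) w = dq d lam z w := (hasDerivAt_qpoly d lam z w).deriv

lemma cont_qpoly (d : ℕ) : Continuous fun p : Param d × ℂ × ℂ => qpoly d p.1 p.2.1 p.2.2 := by
  unfold qpoly
  apply Continuous.add
  · exact (continuous_snd.comp continuous_snd).pow d
  · apply continuous_finset_sum
    intro j _
    apply Continuous.mul
    · apply continuous_finset_sum
      intro k _
      exact (((PiLp.continuous_apply ..).comp continuous_fst).pow _).mul
        ((continuous_fst.comp continuous_snd).pow _)
    · exact (continuous_snd.comp continuous_snd).pow _

lemma cont_dq (d : ℕ) : Continuous fun p : Param d × ℂ × ℂ => dq d p.1 p.2.1 p.2.2 := by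
  unfold dq coefB
  apply Continuous.add
  · exact continuous_const.mul ((continuous_snd.comp continuous_snd).pow _)
  · apply continuous_finset_sum
    intro j _
    apply Continuous.mul
    · apply continuous_finset_sum
      intro k _
      exact (((PiLp.continuous_apply ..).comp continuous_fst).pow _).mul
        ((continuous_fst.comp continuous_snd).pow _)
    · exact continuous_const.mul ((continuous_snd.comp continuous_snd).pow _)

lemma cont_Qit (d : ℕ) (n : ℕ) :
    Continuous fun p : Param d × ℂ × ℂ => Qit d p.1 p.2.1 n p.2.2 := by
  induction n with
  | zero => exact continuous_snd.comp continuous_snd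
  | succ n ih =>
    have : (fun p : Param d × ℂ × ℂ => Qit d p.1 p.2.1 (n+1) p.2.2)
        = (fun p : Param d × ℂ × ℂ => qpoly d p.1 p.2.1 p.2.2) ∘
          (fun p : Param d × ℂ × ℂ => (p.1, p.2.1 ^ d ^ n, Qit d p.1 p.2.1 n p.2.2)) := rfl
    rw [this]
    exact (cont_qpoly d).comp
      (continuous_fst.prodMk (((continuous_fst.comp continuous_snd).pow _).prodMk ih))

lemma cont_Rlam (d : ℕ) : Continuous (Rlam d) := by
  unfold Rlam
  apply continuous_finset_sum
  intro j _
  apply Continuous.rpow_const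
  · apply continuous_finset_sum
    intro k _
    exact ((PiLp.continuous_apply ..).norm).pow _
  · intro x; right; positivity

lemma smul_coord (d : ℕ) (t : ℝ) (lam : Param d) (i : (Σ j : Fin (d - 1), Fin (d - (j : ℕ) + 1))) :
    (t • lam) i = (t : ℂ) * lam i := by
  simp [PiLp.smul_apply, Complex.real_smul]

lemma coefB_smul (d : ℕ) (t : ℝ) (lam : Param d) (z : ℂ) (j : Fin (d - 1)) :
    coefB d (t • lam) z j = (t:ℂ) ^ (d - (j:ℕ)) * coefB d lam z j := by
  unfold coefB
  rw [Finset.mul_sum]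
  refine Finset.sum_congr rfl fun k _ => ?_
  rw [smul_coord, mul_pow]
  ring

lemma qpoly_smul (d : ℕ) (hd : 2 ≤ d) (t : ℝ) (lam : Param d) (z w : ℂ) :
    qpoly d (t • lam) z ((t:ℂ) * w) = (t:ℂ) ^ d * qpoly d lam z w := by
  rw [qpoly_eq, qpoly_eq, mul_add, Finset.mul_sum]
  congr 1
  · rw [mul_pow]
  · refine Finset.sum_congr rfl fun j _ => ?_
    rw [coefB_smul, mul_pow]
    have : ((t:ℂ)) ^ (d - (j:ℕ)) * (t:ℂ) ^ (j:ℕ) = (t:ℂ) ^ d := by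
      rw [← pow_add]; congr 1; have := jlt d hd j; omega
    calc (t:ℂ) ^ (d - (j:ℕ)) * coefB d lam z j * ((t:ℂ) ^ (j:ℕ) * w ^ (j:ℕ))
        = ((t:ℂ) ^ (d - (j:ℕ)) * (t:ℂ) ^ (j:ℕ)) * (coefB d lam z j * w ^ (j:ℕ)) := by ring
      _ = (t:ℂ) ^ d * (coefB d lam z j * w ^ (j:ℕ)) := by rw [this]

lemma dq_smul (d : ℕ) (hd : 2 ≤ d) (t : ℝ) (lam : Param d) (z w : ℂ) :
    dq d (t • lam) z ((t:ℂ) * w) = (t:ℂ) ^ (d - 1) * dq d lam z w := by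
  unfold dq
  rw [mul_add, Finset.mul_sum]
  congr 1
  · rw [mul_pow]; ring
  · refine Finset.sum_congr rfl fun j _ => ?_
    rw [coefB_smul]
    rcases Nat.eq_zero_or_pos (j:ℕ) with h0 | hpos
    · simp [h0]
    · rw [mul_pow]
      have h : ((t:ℂ)) ^ (d - (j:ℕ)) * (t:ℂ) ^ ((j:ℕ) - 1) = (t:ℂ) ^ (d - 1) := by
        rw [← pow_add]; congr 1; have := jlt d hd j; omega
      calc (t:ℂ) ^ (d - (j:ℕ)) * coefB d lam z j * (((j:ℕ):ℂ) * ((t:ℂ) ^ ((j:ℕ)-1) * w ^ ((j:ℕ) - 1)))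
          = ((t:ℂ) ^ (d - (j:ℕ)) * (t:ℂ) ^ ((j:ℕ)-1)) * (coefB d lam z j * (((j:ℕ):ℂ) * w ^ ((j:ℕ)-1))) := by
            ring
        _ = (t:ℂ) ^ (d - 1) * (coefB d lam z j * (((j:ℕ):ℂ) * w ^ ((j:ℕ) - 1))) := by rw [h]

lemma Rlam_smul (d : ℕ) (hd : 2 ≤ d) (t : ℝ) (ht : 0 ≤ t) (lam : Param d) :
    Rlam d (t • lam) = t * Rlam d lam := by
  unfold Rlam
  rw [Finset.mul_sum]
  refine Finset.sum_congr rfl fun j _ => ?_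
  have hX : ∑ k : Fin (d - (j:ℕ) + 1), ‖(t • lam) ⟨j, k⟩‖ ^ (d - (j:ℕ))
      = t ^ (d - (j:ℕ)) * ∑ k : Fin (d - (j:ℕ) + 1), ‖lam ⟨j, k⟩‖ ^ (d - (j:ℕ)) := by
    rw [Finset.mul_sum]
    refine Finset.sum_congr rfl fun k _ => ?_
    rw [smul_coord, norm_mul, mul_pow, Complex.norm_real, Real.norm_eq_abs, abs_of_nonneg ht]
  rw [hX]
  have hn : d - (j:ℕ) ≠ 0 := by have := jlt d hd j; omega
  rw [Real.mul_rpow (by positivity) (Finset.sum_nonneg fun k _ => pow_nonneg (norm_nonneg _) _),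
    ← Real.rpow_natCast t (d - (j:ℕ)), ← Real.rpow_mul ht,
    mul_inv_cancel₀ (by exact_mod_cast hn), Real.rpow_one]

lemma closed_union (d : ℕ) (hd : 2 ≤ d) (S : Set ℂ) (hSc : IsCompact S)
    (hS : ∀ z ∈ S, ‖z‖ = 1) : IsClosed (⋃ z ∈ S, Bz d z) := by
  apply IsSeqClosed.isClosed
  intro x p hx hxp
  -- unpack membership
  have hx' : ∀ n, ∃ z, z ∈ S ∧ x n ∈ Bz d z := by
    intro n
    simpa [Set.mem_iUnion] using hx n
  choose zs hzS hzB using hx'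
  have hchar : ∀ n, ∃ c : ℂ, dq d (x n) (zs n) c = 0 ∧
      ∀ m, ‖Qit d (x n) (zs n) m c‖ ≤ Rlam d (x n) + 2 := by
    intro n
    obtain ⟨c, hc1, hc2⟩ := (memBz_iff d hd (x n) (zs n) (hS _ (hzS n))).mp (hzB n)
    exact ⟨c, by rwa [deriv_qpoly] at hc1, hc2⟩
  choose cs hc1 hc2 using hchar
  -- tail bound on critical points
  have hRtend : Filter.Tendsto (fun n => Rlam d (x n)) Filter.atTop (nhds (Rlam d p)) :=
    ((cont_Rlam d).tendsto p).comp hxp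
  set M : ℝ := Rlam d p + 3 with hM
  have hev : ∀ᶠ n in Filter.atTop, Rlam d (x n) ≤ Rlam d p + 1 :=
    hRtend.eventually_le_const (by linarith)
  obtain ⟨N, hN⟩ := Filter.eventually_atTop.mp hev
  have hcball : ∀ n, cs (n + N) ∈ Metric.closedBall (0:ℂ) M := by
    intro n
    have h0 := hc2 (n + N) 0
    have : Qit d (x (n+N)) (zs (n+N)) 0 (cs (n+N)) = cs (n+N) := rfl
    rw [this] at h0
    have := hN (n + N) (by omega)
    simp only [Metric.mem_closedBall, Complex.dist_eq, sub_zero]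
    linarith
  -- extract convergent subsequence of (z, c)
  have hcomp : IsCompact (S ×ˢ Metric.closedBall (0:ℂ) M) :=
    hSc.prod (isCompact_closedBall 0 M)
  obtain ⟨⟨z₀, c₀⟩, hmem, φ, hφ, hconv⟩ := hcomp.tendsto_subseq
    (x := fun n => (zs (n + N), cs (n + N))) (fun n => ⟨hzS _, hcball n⟩)
  set ψ : ℕ → ℕ := fun n => φ n + N with hψ
  have hψtop : Filter.Tendsto ψ Filter.atTop Filter.atTop := by
    apply Filter.tendsto_atTop_mono (fun n => Nat.le_add_right (φ n) N) hφ.tendsto_atTop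
  have hxψ : Filter.Tendsto (fun n => x (ψ n)) Filter.atTop (nhds p) := hxp.comp hψtop
  have hzψ : Filter.Tendsto (fun n => zs (ψ n)) Filter.atTop (nhds z₀) := by
    have := (continuous_fst.tendsto (z₀, c₀)).comp hconv
    simpa [Function.comp_def, hψ, Nat.add_comm] using this
  have hcψ : Filter.Tendsto (fun n => cs (ψ n)) Filter.atTop (nhds c₀) := by
    have := (continuous_snd.tendsto (z₀, c₀)).comp hconv
    simpa [Function.comp_def, hψ, Nat.add_comm] using this
  have htriple : Filter.Tendsto (fun n => ((x (ψ n)), ((zs (ψ n)), (cs (ψ n)))))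
      Filter.atTop (nhds (p, (z₀, c₀))) := by
    exact hxψ.prodMk_nhds (hzψ.prodMk_nhds hcψ)
  -- pass to limit
  have hdq0 : dq d p z₀ c₀ = 0 := by
    have hval : Filter.Tendsto (fun n => dq d (x (ψ n)) (zs (ψ n)) (cs (ψ n)))
        Filter.atTop (nhds (dq d p z₀ c₀)) := ((cont_dq d).tendsto _).comp htriple
    have : (fun n => dq d (x (ψ n)) (zs (ψ n)) (cs (ψ n))) = fun _ => (0:ℂ) := by
      funext n; exact hc1 (ψ n)
    rw [this] at hval
    exact (tendsto_nhds_unique tendsto_const_nhds hval).symm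
  have horb : ∀ m, ‖Qit d p z₀ m c₀‖ ≤ Rlam d p + 2 := by
    intro m
    have hval : Filter.Tendsto (fun n => ‖Qit d (x (ψ n)) (zs (ψ n)) m (cs (ψ n))‖)
        Filter.atTop (nhds ‖Qit d p z₀ m c₀‖) :=
      (((cont_Qit d m).tendsto _).comp htriple).norm
    have hrhs : Filter.Tendsto (fun n => Rlam d (x (ψ n)) + 2) Filter.atTop
        (nhds (Rlam d p + 2)) := (hRtend.comp hψtop).add_const 2
    exact le_of_tendsto_of_tendsto' hval hrhs (fun n => hc2 (ψ n) m)
  have hz₀S : z₀ ∈ S := hmem.1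
  refine Set.mem_biUnion hz₀S ?_
  exact (memBz_iff d hd p z₀ (hS _ hz₀S)).mpr ⟨c₀, by rwa [deriv_qpoly], horb⟩

lemma circle_compact : IsCompact {z : ℂ | ‖z‖ = 1} := by
  have : {z : ℂ | ‖z‖ = 1} = Metric.sphere (0:ℂ) 1 := by
    ext z; simp [Complex.dist_eq]
  rw [this]; exact isCompact_sphere 0 1

lemma Qit_one (d : ℕ) (lam : Param d) (z c : ℂ) : Qit d lam z 1 c = qpoly d lam z c := by
  show qpoly d lam (z ^ d ^ 0) c = qpoly d lam z c
  norm_num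

lemma accInf_subset (d : ℕ) (hd : 2 ≤ d) :
    AccInf d (⋃ z ∈ {z : ℂ | ‖z‖ = 1}, Bz d z) ⊆
      ⋃ z ∈ {z : ℂ | ‖z‖ = 1}, Ez d z := by
  intro μ hμ
  obtain ⟨hnorm, L, hmem, htop, hlim⟩ := hμ
  have hmem' : ∀ n, ∃ z, ‖z‖ = 1 ∧ L n ∈ Bz d z := by
    intro n; simpa [Set.mem_iUnion] using hmem n
  choose zs hz1 hzB using hmem'
  have hchar : ∀ n, ∃ c : ℂ, dq d (L n) (zs n) c = 0 ∧
      ∀ m, ‖Qit d (L n) (zs n) m c‖ ≤ Rlam d (L n) + 2 := by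
    intro n
    obtain ⟨c, hc1, hc2⟩ := (memBz_iff d hd (L n) (zs n) (hz1 n)).mp (hzB n)
    exact ⟨c, by rwa [deriv_qpoly] at hc1, hc2⟩
  choose cs hc1 hc2 using hchar
  set r : ℕ → ℝ := fun n => ‖L n‖ with hr
  set t : ℕ → ℝ := fun n => (r n)⁻¹ with htdef
  set μs : ℕ → Param d := fun n => t n • L n with hμs
  have hlim' : Filter.Tendsto μs Filter.atTop (nhds μ) := hlim
  have hRμ : Filter.Tendsto (fun n => Rlam d (μs n)) Filter.atTop (nhds (Rlam d μ)) :=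
    ((cont_Rlam d).tendsto μ).comp hlim'
  have ht0 : ∀ n, 0 ≤ t n := fun n => inv_nonneg.mpr (norm_nonneg _)
  have hev1 : ∀ᶠ n in Filter.atTop, 1 ≤ r n := htop.eventually_ge_atTop 1
  have hev2 : ∀ᶠ n in Filter.atTop, Rlam d (μs n) ≤ Rlam d μ + 1 :=
    hRμ.eventually_le_const (by linarith)
  obtain ⟨N, hN⟩ := Filter.eventually_atTop.mp (hev1.and hev2)
  set M : ℝ := Rlam d μ + 3 with hM
  set cs' : ℕ → ℂ := fun n => ((t n : ℝ) : ℂ) * cs n with hcs'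
  have hRsmul : ∀ n, Rlam d (μs n) = t n * Rlam d (L n) := fun n =>
    Rlam_smul d hd (t n) (ht0 n) (L n)
  have ht1 : ∀ n, N ≤ n → t n ≤ 1 := by
    intro n hn
    exact inv_le_one_of_one_le₀ (hN n hn).1
  have hcnorm : ∀ n, ‖cs n‖ ≤ Rlam d (L n) + 2 := by
    intro n
    have := hc2 n 0
    exact this
  have hcball : ∀ n, N ≤ n → cs' n ∈ Metric.closedBall (0:ℂ) M := by
    intro n hn
    simp only [Metric.mem_closedBall, Complex.dist_eq, sub_zero]
    have h1 : ‖cs' n‖ = t n * ‖cs n‖ := by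
      rw [hcs']
      simp only [norm_mul, Complex.norm_real, Real.norm_eq_abs, abs_of_nonneg (ht0 n)]
    rw [h1]
    have h2 : t n * ‖cs n‖ ≤ t n * (Rlam d (L n) + 2) :=
      mul_le_mul_of_nonneg_left (hcnorm n) (ht0 n)
    have h3 : t n * (Rlam d (L n) + 2) = Rlam d (μs n) + 2 * t n := by
      rw [hRsmul n]; ring
    have h4 := (hN n hn).2
    have h5 := ht1 n hn
    rw [hM]; linarith
  have hqbound : ∀ n, N ≤ n → ‖qpoly d (μs n) (zs n) (cs' n)‖ ≤ t n * M := by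
    intro n hn
    have hs : qpoly d (μs n) (zs n) (cs' n) = ((t n : ℝ):ℂ) ^ d * qpoly d (L n) (zs n) (cs n) :=
      qpoly_smul d hd (t n) (L n) (zs n) (cs n)
    rw [hs, norm_mul, norm_pow, Complex.norm_real, Real.norm_eq_abs, abs_of_nonneg (ht0 n)]
    have h1 : ‖qpoly d (L n) (zs n) (cs n)‖ ≤ Rlam d (L n) + 2 := by
      have := hc2 n 1
      rwa [Qit_one] at this
    have h2 : (t n) ^ d * ‖qpoly d (L n) (zs n) (cs n)‖ ≤ (t n) ^ d * (Rlam d (L n) + 2) :=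
      mul_le_mul_of_nonneg_left h1 (pow_nonneg (ht0 n) d)
    have h3 : (t n) ^ d * (Rlam d (L n) + 2) = (t n)^(d-1) * (t n * Rlam d (L n)) + 2 * (t n)^d := by
      have : (t n) ^ d = (t n)^(d-1) * t n := by
        rw [← pow_succ]; congr 1; omega
      rw [this]; ring
    have h4 : (t n)^(d-1) ≤ t n := pow_le_of_le_one (ht0 n) (ht1 n hn) (by omega)
    have h5 : (t n)^d ≤ t n := pow_le_of_le_one (ht0 n) (ht1 n hn) (by omega)
    have h6 := (hN n hn).2
    have h7 : (t n)^(d-1) * (t n * Rlam d (L n)) ≤ t n * (Rlam d μ + 1) := by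
      rw [← hRsmul n]
      calc (t n)^(d-1) * Rlam d (μs n) ≤ t n * Rlam d (μs n) := by
            apply mul_le_mul_of_nonneg_right h4 (Rlam_nonneg d (μs n))
        _ ≤ t n * (Rlam d μ + 1) := mul_le_mul_of_nonneg_left h6 (ht0 n)
    rw [hM]
    nlinarith [h2, h3, h5, h7]
  have hdq0 : ∀ n, dq d (μs n) (zs n) (cs' n) = 0 := by
    intro n
    have := dq_smul d hd (t n) (L n) (zs n) (cs n)
    rw [hcs']
    simp only []
    rw [this, hc1 n, mul_zero]
  -- subsequence extraction
  have hcomp : IsCompact ({z : ℂ | ‖z‖ = 1} ×ˢ Metric.closedBall (0:ℂ) M) :=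
    circle_compact.prod (isCompact_closedBall 0 M)
  obtain ⟨⟨z₀, c₀⟩, hmem₀, φ, hφ, hconv⟩ := hcomp.tendsto_subseq
    (x := fun n => (zs (n + N), cs' (n + N)))
    (fun n => ⟨hz1 _, hcball (n + N) (by omega)⟩)
  set ψ : ℕ → ℕ := fun n => φ n + N with hψ
  have hψtop : Filter.Tendsto ψ Filter.atTop Filter.atTop := by
    apply Filter.tendsto_atTop_mono (fun n => Nat.le_add_right (φ n) N) hφ.tendsto_atTop
  have hμψ : Filter.Tendsto (fun n => μs (ψ n)) Filter.atTop (nhds μ) := hlim'.comp hψtop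
  have hzψ : Filter.Tendsto (fun n => zs (ψ n)) Filter.atTop (nhds z₀) := by
    have := (continuous_fst.tendsto (z₀, c₀)).comp hconv
    simpa [Function.comp_def, hψ, Nat.add_comm] using this
  have hcψ : Filter.Tendsto (fun n => cs' (ψ n)) Filter.atTop (nhds c₀) := by
    have := (continuous_snd.tendsto (z₀, c₀)).comp hconv
    simpa [Function.comp_def, hψ, Nat.add_comm] using this
  have htriple : Filter.Tendsto (fun n => ((μs (ψ n)), ((zs (ψ n)), (cs' (ψ n)))))
      Filter.atTop (nhds (μ, (z₀, c₀))) := hμψ.prodMk_nhds (hzψ.prodMk_nhds hcψ)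
  have hdq : dq d μ z₀ c₀ = 0 := by
    have hval : Filter.Tendsto (fun n => dq d (μs (ψ n)) (zs (ψ n)) (cs' (ψ n)))
        Filter.atTop (nhds (dq d μ z₀ c₀)) := ((cont_dq d).tendsto _).comp htriple
    have heq : (fun n => dq d (μs (ψ n)) (zs (ψ n)) (cs' (ψ n))) = fun _ => (0:ℂ) := by
      funext n; exact hdq0 (ψ n)
    rw [heq] at hval
    exact (tendsto_nhds_unique tendsto_const_nhds hval).symm
  have hq : qpoly d μ z₀ c₀ = 0 := by
    have hval : Filter.Tendsto (fun n => ‖qpoly d (μs (ψ n)) (zs (ψ n)) (cs' (ψ n))‖)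
        Filter.atTop (nhds ‖qpoly d μ z₀ c₀‖) :=
      (((cont_qpoly d).tendsto _).comp htriple).norm
    have ht0' : Filter.Tendsto (fun n => t (ψ n) * M) Filter.atTop (nhds 0) := by
      have h1 : Filter.Tendsto (fun n => t (ψ n)) Filter.atTop (nhds 0) :=
        (htop.comp hψtop).inv_tendsto_atTop
      simpa using h1.mul_const M
    have hz0 : Filter.Tendsto (fun n => ‖qpoly d (μs (ψ n)) (zs (ψ n)) (cs' (ψ n))‖)
        Filter.atTop (nhds 0) :=
      squeeze_zero (fun n => norm_nonneg _)
        (fun n => hqbound (ψ n) (by simp [hψ])) ht0'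
    have := tendsto_nhds_unique hval hz0
    exact norm_eq_zero.mp this
  refine Set.mem_biUnion hmem₀.1 ?_
  exact ⟨hnorm, c₀, hq, by rw [deriv_qpoly]; exact hdq⟩

/-- each `𝓑_z` is closed, `B = ⋃_{|z|=1} 𝓑_z` is closed,
and `Acc^∞(B) ⊆ E = ⋃_{|z|=1} E_z`. -/
theorem Bz_closed_and_accInf (d : ℕ) (hd : 2 ≤ d) :
    (∀ z : ℂ, ‖z‖ = 1 → IsClosed (Bz d z)) ∧
    IsClosed (⋃ z ∈ {z : ℂ | ‖z‖ = 1}, Bz d z) ∧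
    AccInf d (⋃ z ∈ {z : ℂ | ‖z‖ = 1}, Bz d z) ⊆
      ⋃ z ∈ {z : ℂ | ‖z‖ = 1}, Ez d z := by
  refine ⟨?_, ?_, accInf_subset d hd⟩
  · intro z hz
    have := closed_union d hd {z} isCompact_singleton
      (fun z' hz' => by rwa [Set.mem_singleton_iff.mp hz'])
    simpa using this
  · exact closed_union d hd _ circle_compact (fun z hz => hz)
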